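/- For objects Z, W of Z(G,α) and commuting elements f, g of G, the character of the tensor product satisfies χ_{Z⊗W}(f,g) = Σ over factorizations f₁f₂ = f with f_i commuting with g, of α(g|f₁,f₂) · χ_Z(f₁,g) · χ_W(f₂,g). -/

import Mathlib

/-!
Since `ρ g` maps `Z_h` onto `Z_{ghg⁻¹}`, the degree-`f` projection kills every summand
`α(g|f₁,f₂) • (ρ g ∘ p f₁) ⊗ (ρ g ∘ p f₂)` of the action of `g` on `Z ⊗ W` unless
`g(f₁f₂)g⁻¹ = f`, and leaves the others unchanged. The trace of a surviving summand is
`α(g|f₁,f₂) χ_Z(f₁,g) χ_W(f₂,g)`, and `χ_Z(h,g) = 0` unless `h` commutes with `g`, because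
otherwise `ρ g` maps `Z_h` into the different summand `Z_{ghg⁻¹}`.
-/

open scoped BigOperators TensorProduct

/-- `α(f,g|h) = α(f,g,h)⁻¹ · α(f, ghg⁻¹, g) · α((fg)h(fg)⁻¹, f, g)⁻¹`. -/
def aux2 {G : Type} [Group G] {k : Type} [Field k]
    (α : G → G → G → kˣ) (f g h : G) : kˣ :=
  (α f g h)⁻¹ * α f (g * h * g⁻¹) g * (α ((f * g) * h * (f * g)⁻¹) f g)⁻¹

/-- `α(f|g,h) = α(f,g,h) · α(fgf⁻¹, f, h)⁻¹ · α(fgf⁻¹, fhf⁻¹, f)`. -/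
def aux1 {G : Type} [Group G] {k : Type} [Field k]
    (α : G → G → G → kˣ) (f g h : G) : kˣ :=
  α f g h * (α (f * g * f⁻¹) f h)⁻¹ * α (f * g * f⁻¹) (f * h * f⁻¹) f

/-- An object of `Z(G,α)`: a finite-dimensional `G`-graded vector space with an
`α`-projective `G`-action compatible with the grading. -/
structure ZObj (k : Type) [Field k] (G : Type) [Group G] [Fintype G]
    (α : G → G → G → kˣ) where
  V : Type
  [ac : AddCommGroup V]
  [mo : Module k V]
  [fin : Module.Finite k V]
  p : G → V →ₗ[k] V
  p_idem : ∀ g, p g ∘ₗ p g = p g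
  p_orth : ∀ g h, g ≠ h → p g ∘ₗ p h = 0
  p_total : ∑ g : G, p g = LinearMap.id
  ρ : G → V →ₗ[k] V
  ρ_one : ρ 1 = LinearMap.id
  ρ_bij : ∀ g, Function.Bijective (ρ g)
  grade : ∀ g h, ρ g ∘ₗ p h = p (g * h * g⁻¹) ∘ₗ ρ g
  proj : ∀ g h x, ρ (g * h) ∘ₗ p x
    = ((aux2 α g h x : kˣ) : k) • ((ρ g ∘ₗ ρ h) ∘ₗ p x)

attribute [instance] ZObj.ac ZObj.mo ZObj.fin

variable {k : Type} [Field k] {G : Type} [Group G] [Fintype G] [DecidableEq G]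
  {α : G → G → G → kˣ}

/-- The character `χ_Z(f,g) = Tr_{Z_f}(g)`. -/
noncomputable def chi (Z : ZObj k G α) (f g : G) : k :=
  LinearMap.trace k Z.V (Z.p f ∘ₗ Z.ρ g)

/-- The degree-`f` projection of the tensor product `Z ⊗ W` in `Z(G,α)`:
`(Z⊗W)_f = ⊕_{f₁f₂ = f} Z_{f₁} ⊗ W_{f₂}`. -/
noncomputable def tenP (Z W : ZObj k G α) (f : G) :
    Z.V ⊗[k] W.V →ₗ[k] Z.V ⊗[k] W.V :=
  ∑ q : G × G, if q.1 * q.2 = f then TensorProduct.map (Z.p q.1) (W.p q.2) else 0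

/-- The action of `g` on the tensor product `Z ⊗ W` in `Z(G,α)`:
`g.(x⊗y) = α(g|f₁,f₂)(g.x ⊗ g.y)` for `x ∈ Z_{f₁}`, `y ∈ W_{f₂}`. -/
noncomputable def tenRho (Z W : ZObj k G α) (g : G) :
    Z.V ⊗[k] W.V →ₗ[k] Z.V ⊗[k] W.V :=
  ∑ q : G × G, ((aux1 α g q.1 q.2 : kˣ) : k) •
    TensorProduct.map (Z.ρ g ∘ₗ Z.p q.1) (W.ρ g ∘ₗ W.p q.2)

namespace ZObj

variable (Z : ZObj k G α)

lemma p_comp_ρ_comp_p (g a b : G) :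
    Z.p a ∘ₗ Z.ρ g ∘ₗ Z.p b = if a = g * b * g⁻¹ then Z.ρ g ∘ₗ Z.p b else 0 := by
  rw [Z.grade g b, ← LinearMap.comp_assoc]
  split_ifs with h
  · rw [h, Z.p_idem, ← Z.grade]
  · rw [Z.p_orth _ _ h, LinearMap.zero_comp]

omit [DecidableEq G] in
lemma trace_ρ_comp_p (f g : G) : LinearMap.trace k Z.V (Z.ρ g ∘ₗ Z.p f) = chi Z f g :=
  LinearMap.trace_comp_comm' _ _

lemma chi_eq_zero_of_not_commute {f g : G} (hfg : ¬ Commute f g) : chi Z f g = 0 := by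
  obtain ⟨h, rfl⟩ : ∃ h, g * h * g⁻¹ = f := ⟨g⁻¹ * f * g, by group⟩
  have hne : h ≠ g * h * g⁻¹ := fun he =>
    hfg (by rw [← he]; exact (mul_inv_eq_iff_eq_mul.mp he.symm).symm)
  calc chi Z (g * h * g⁻¹) g = LinearMap.trace k Z.V (Z.ρ g ∘ₗ Z.p h) := by
        rw [chi, ← Z.grade]
    _ = LinearMap.trace k Z.V ((Z.ρ g ∘ₗ Z.p h) ∘ₗ Z.p h) := by
        rw [LinearMap.comp_assoc, Z.p_idem]
    _ = LinearMap.trace k Z.V (Z.p h ∘ₗ Z.ρ g ∘ₗ Z.p h) := LinearMap.trace_comp_comm' _ _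
    _ = 0 := by rw [Z.p_comp_ρ_comp_p, if_neg hne, map_zero]

end ZObj

variable (Z W : ZObj k G α)

lemma tenP_comp_map_ρ_comp_p (f g a b : G) :
    tenP Z W f ∘ₗ TensorProduct.map (Z.ρ g ∘ₗ Z.p a) (W.ρ g ∘ₗ W.p b)
      = if g * (a * b) * g⁻¹ = f then
          TensorProduct.map (Z.ρ g ∘ₗ Z.p a) (W.ρ g ∘ₗ W.p b) else 0 := by
  have hsupp (q : G × G) :
      TensorProduct.map (Z.p q.1) (W.p q.2) ∘ₗ
          TensorProduct.map (Z.ρ g ∘ₗ Z.p a) (W.ρ g ∘ₗ W.p b)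
        = if q = (g * a * g⁻¹, g * b * g⁻¹) then
            TensorProduct.map (Z.ρ g ∘ₗ Z.p a) (W.ρ g ∘ₗ W.p b) else 0 := by
    simp only [← TensorProduct.map_comp, ZObj.p_comp_ρ_comp_p, Prod.ext_iff]
    split_ifs <;> simp_all
  rw [tenP, ← Module.End.mul_eq_comp, Finset.sum_mul]
  simp only [ite_mul, zero_mul, Module.End.mul_eq_comp, hsupp, ← ite_and,
    and_comm (a := _ * _ = f)]
  rw [Fintype.sum_eq_single _ fun q hq => if_neg fun h => hq h.1]
  simp only [true_and, show g * a * g⁻¹ * (g * b * g⁻¹) = g * (a * b) * g⁻¹ by group]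

open scoped Classical in
lemma trace_tenP_comp_map_ρ_comp_p (f g a b : G) :
    LinearMap.trace k (Z.V ⊗[k] W.V)
        (tenP Z W f ∘ₗ TensorProduct.map (Z.ρ g ∘ₗ Z.p a) (W.ρ g ∘ₗ W.p b))
      = if a * b = f ∧ Commute a g ∧ Commute b g then chi Z a g * chi W b g else 0 := by
  rw [tenP_comp_map_ρ_comp_p, apply_ite (LinearMap.trace k _), map_zero,
    LinearMap.trace_tensorProduct', Z.trace_ρ_comp_p, W.trace_ρ_comp_p]
  by_cases ha : Commute a g
  · by_cases hb : Commute b g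
    · simp only [(ha.mul_left hb).symm.mul_inv_cancel, ha, hb, and_true]
    · simp [W.chi_eq_zero_of_not_commute hb]
  · simp [Z.chi_eq_zero_of_not_commute ha]

open scoped Classical in
theorem stmt14_general (Z W : ZObj k G α) (f g : G) :
    LinearMap.trace k (Z.V ⊗[k] W.V) (tenP Z W f ∘ₗ tenRho Z W g)
      = ∑ q : G × G,
          if q.1 * q.2 = f ∧ Commute q.1 g ∧ Commute q.2 g then
            ((aux1 α g q.1 q.2 : kˣ) : k) * chi Z q.1 g * chi W q.2 g
          else 0 := by
  rw [tenRho, ← Module.End.mul_eq_comp, Finset.mul_sum, map_sum]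
  refine Fintype.sum_congr _ _ fun q => ?_
  rw [mul_smul_comm, map_smul, Module.End.mul_eq_comp, trace_tenP_comp_map_ρ_comp_p, smul_eq_mul,
    mul_ite, mul_zero, mul_assoc]

open scoped Classical in
/-- for objects `Z, W` of `Z(G,α)` and commuting `f,g ∈ G`, the
character of the tensor product satisfies
`χ_{Z⊗W}(f,g) = Σ_{f₁f₂=f, f_i g=g f_i} α(g|f₁,f₂) χ_Z(f₁,g) χ_W(f₂,g)`. -/
theorem stmt14
    (hcoc : ∀ f g h l : G,
      α g h l * α f (g * h) l * α f g h = α (f * g) h l * α f g (h * l))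
    (hnorm : ∀ f g h : G, f = 1 ∨ g = 1 ∨ h = 1 → α f g h = 1)
    (Z W : ZObj k G α) (f g : G) (hfg : Commute f g) :
    LinearMap.trace k (Z.V ⊗[k] W.V) (tenP Z W f ∘ₗ tenRho Z W g)
      = ∑ q : G × G,
          if q.1 * q.2 = f ∧ Commute q.1 g ∧ Commute q.2 g then
            ((aux1 α g q.1 q.2 : kˣ) : k) * chi Z q.1 g * chi W q.2 g
          else 0 :=
  stmt14_general Z W f g
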